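/- Let h(x) = x log x − x + 1 and h'(r) = log r. If the inequality h(x) ≥ h(r) + r h'(r)(log x − log r) holds for some pair (x₀, r₀) with 0 < x₀ ≤ r₀ ≤ 1 and r₀ ≥ 1/e, then it holds for all (x, r) ∈ [x₀, 1] × [r₀, 1]. -/

import Mathlib

open Real

noncomputable section

/-- The function `h(x) = x log x - x + 1` (with `h(0) = 1` since `Real.log 0 = 0`). -/
def hfun (x : ℝ) : ℝ := x * Real.log x - x + 1

/-! Fix `r` and let `f(x) = h(x) - h(r) - r log r (log x - log r)`. Then
`f'(x) = log x - r log r / x` vanishes at `x = r` and `f''(x) = (x + r log r) / x²`, so with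
`c = -r log r` the function `f` is concave on `(0, c]` and convex on `[c, ∞)`. As `r ≥ 1/e`
gives `r ≥ c`, the tangent line at `r` shows `f ≥ 0` on `[c, ∞)`; on `(0, c]` concavity, with
`f(c) ≥ 0`, propagates `f ≥ 0` from any point to everything on its right. Thus the hypothesis at
`(x₀, r₀)` gives the inequality at `(x, r₀)` for all `x ≥ x₀`. Moving `r` up from `r₀`: for
`x ≤ r₀` the right-hand side decreases in `r` (its `r`-derivative is
`-(1 + log r)(log r - log x) ≤ 0`), and for `x ≥ r₀` we are in the convex regime, since
`-r log r ≤ 1/e ≤ r₀`. -/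

open Set

lemma ConvexOn.isMinOn_of_hasDerivAt_eq_zero {S : Set ℝ} {f : ℝ → ℝ} {x : ℝ}
    (hf : ConvexOn ℝ S f) (hx : x ∈ S) (hf' : HasDerivAt f 0 x) : IsMinOn f S x := by
  refine isMinOn_iff.2 fun y hy => ?_
  rcases lt_trichotomy y x with hyx | rfl | hxy
  · have := hf.slope_le_of_hasDerivAt hy hx hyx hf'
    rw [slope_def_field, div_le_iff₀ (sub_pos.2 hyx)] at this
    linarith
  · exact le_rfl
  · have := hf.le_slope_of_hasDerivAt hx hy hxy hf'
    rw [slope_def_field, le_div_iff₀ (sub_pos.2 hxy)] at this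
    linarith

lemma neg_exp_neg_one_le_mul_log {t : ℝ} (ht : 0 ≤ t) : -exp (-1) ≤ t * log t := by
  rcases ht.eq_or_lt with rfl | ht
  · simpa using (exp_pos (-1)).le
  · have := mul_exp_neg_le_exp_neg_one (-log t)
    rw [neg_neg, exp_log ht] at this
    linarith

lemma hasDerivAt_hfun {x : ℝ} (hx : x ≠ 0) : HasDerivAt hfun (log x) x :=
  (((hasDerivAt_mul_log hx).sub (hasDerivAt_id x)).add_const 1).congr_deriv (by ring)

def hfunGap (r x : ℝ) : ℝ := hfun x - (hfun r + r * log r * (log x - log r))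

lemma hfunGap_self (r : ℝ) : hfunGap r r = 0 := by
  simp [hfunGap]

lemma hasDerivAt_hfunGap (r : ℝ) {x : ℝ} (hx : x ≠ 0) :
    HasDerivAt (hfunGap r) (log x - r * log r / x) x := by
  have := (hasDerivAt_hfun hx).sub
    ((((hasDerivAt_log hx).sub_const (log r)).const_mul (r * log r)).const_add (hfun r))
  exact this.congr_deriv (by rw [div_eq_mul_inv])

lemma hasDerivAt_deriv_hfunGap (r : ℝ) {x : ℝ} (hx : x ≠ 0) :
    HasDerivAt (fun y => log y - r * log r / y) ((x + r * log r) / x ^ 2) x := by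
  have := (hasDerivAt_log hx).sub ((hasDerivAt_inv hx).const_mul (r * log r))
  exact this.congr_deriv (by field_simp; ring)

lemma convexOn_hfunGap (r : ℝ) : ConvexOn ℝ (Ioi 0 ∩ Ici (-(r * log r))) (hfunGap r) := by
  refine convexOn_of_hasDerivWithinAt2_nonneg (f' := fun y => log y - r * log r / y)
    (f'' := fun y => (y + r * log r) / y ^ 2) ((convex_Ioi 0).inter (convex_Ici _))
    (fun x hx => (hasDerivAt_hfunGap r hx.1.ne').continuousAt.continuousWithinAt)
    (fun x hx => ?_) (fun x hx => ?_) (fun x hx => ?_)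
  all_goals rw [interior_inter, interior_Ioi, interior_Ici] at hx
  · exact (hasDerivAt_hfunGap r hx.1.ne').hasDerivWithinAt
  · exact (hasDerivAt_deriv_hfunGap r hx.1.ne').hasDerivWithinAt
  · exact div_nonneg (by linarith [hx.2.out]) (sq_nonneg x)

lemma concaveOn_hfunGap (r : ℝ) : ConcaveOn ℝ (Ioi 0 ∩ Iic (-(r * log r))) (hfunGap r) := by
  refine concaveOn_of_hasDerivWithinAt2_nonpos (f' := fun y => log y - r * log r / y)
    (f'' := fun y => (y + r * log r) / y ^ 2) ((convex_Ioi 0).inter (convex_Iic _))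
    (fun x hx => (hasDerivAt_hfunGap r hx.1.ne').continuousAt.continuousWithinAt)
    (fun x hx => ?_) (fun x hx => ?_) (fun x hx => ?_)
  all_goals rw [interior_inter, interior_Ioi, interior_Iic] at hx
  · exact (hasDerivAt_hfunGap r hx.1.ne').hasDerivWithinAt
  · exact (hasDerivAt_deriv_hfunGap r hx.1.ne').hasDerivWithinAt
  · exact div_nonpos_of_nonpos_of_nonneg (by linarith [hx.2.out]) (sq_nonneg x)

lemma hfunGap_nonneg {r x : ℝ} (hr : exp (-1) ≤ r) (hx : 0 < x) (hcx : -(r * log r) ≤ x) :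
    0 ≤ hfunGap r x := by
  have hr0 : 0 < r := (exp_pos _).trans_le hr
  have hlog : -1 ≤ log r := (le_log_iff_exp_le hr0).2 hr
  have hcr : -(r * log r) ≤ r := by nlinarith
  have hmin := (convexOn_hfunGap r).isMinOn_of_hasDerivAt_eq_zero ⟨hr0, hcr⟩
    ((hasDerivAt_hfunGap r hr0.ne').congr_deriv (by field_simp; ring))
  simpa [hfunGap_self] using hmin ⟨hx, hcx⟩

lemma hfunGap_nonneg_of_le {r a x : ℝ} (hr : exp (-1) ≤ r) (ha : 0 < a) (hax : a ≤ x)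
    (h : 0 ≤ hfunGap r a) : 0 ≤ hfunGap r x := by
  rcases le_or_gt (-(r * log r)) x with hcx | hxc
  · exact hfunGap_nonneg hr (ha.trans_le hax) hcx
  · have hc : 0 < -(r * log r) := (ha.trans_le hax).trans hxc
    have hac : a ≤ -(r * log r) := hax.trans hxc.le
    have hmin := (concaveOn_hfunGap r).ge_on_segment ⟨ha, hac⟩ ⟨hc, self_mem_Iic⟩
      (by rw [segment_eq_Icc hac]; exact ⟨hax, hxc.le⟩)
    exact (le_min h (hfunGap_nonneg hr hc le_rfl)).trans hmin

lemma hasDerivAt_hfunGap_left (x : ℝ) {r : ℝ} (hr : r ≠ 0) :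
    HasDerivAt (fun r => hfunGap r x) ((1 + log r) * (log r - log x)) r := by
  have := (hasDerivAt_const r (hfun x)).sub ((hasDerivAt_hfun hr).add
    ((hasDerivAt_mul_log hr).mul ((hasDerivAt_log hr).const_sub (log x))))
  exact this.congr_deriv (by field_simp; ring)

lemma monotoneOn_hfunGap_left {x r₀ : ℝ} (hx : 0 < x) (hxr : x ≤ r₀) (hr₀ : exp (-1) ≤ r₀) :
    MonotoneOn (fun r => hfunGap r x) (Ici r₀) := by
  have hr₀0 : 0 < r₀ := (exp_pos _).trans_le hr₀
  refine monotoneOn_of_hasDerivWithinAt_nonneg (f' := fun r => (1 + log r) * (log r - log x))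
    (convex_Ici r₀)
    (fun r hr => (hasDerivAt_hfunGap_left x (hr₀0.trans_le hr).ne').continuousAt.continuousWithinAt)
    (fun r hr => ?_) (fun r hr => ?_)
  all_goals rw [interior_Ici] at hr
  · exact (hasDerivAt_hfunGap_left x (hr₀0.trans hr).ne').hasDerivWithinAt
  · have hlog : -1 ≤ log r := (le_log_iff_exp_le (hr₀0.trans hr)).2 (hr₀.trans hr.out.le)
    have hlogx : log x ≤ log r := log_le_log hx (hxr.trans hr.out.le)
    exact mul_nonneg (by linarith) (sub_nonneg.2 hlogx)

theorem stmt_15 (x₀ r₀ : ℝ) (hx₀ : 0 < x₀)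
    (hr₀e : (Real.exp 1)⁻¹ ≤ r₀)
    (h0 : hfun x₀ ≥ hfun r₀ + r₀ * Real.log r₀ * (Real.log x₀ - Real.log r₀)) :
    ∀ x ∈ Set.Icc x₀ 1, ∀ r ∈ Set.Icc r₀ 1,
      hfun x ≥ hfun r + r * Real.log r * (Real.log x - Real.log r) := by
  rw [← exp_neg] at hr₀e
  intro x hx r hr
  have hx0 : 0 < x := hx₀.trans_le hx.1
  suffices 0 ≤ hfunGap r x from sub_nonneg.1 this
  rcases le_total x r₀ with hxr₀ | hr₀x
  · calc 0 ≤ hfunGap r₀ x := hfunGap_nonneg_of_le hr₀e hx₀ hx.1 (sub_nonneg.2 h0)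
      _ ≤ hfunGap r x := monotoneOn_hfunGap_left hx0 hxr₀ hr₀e self_mem_Ici hr.1 hr.1
  · have hre : exp (-1) ≤ r := hr₀e.trans hr.1
    have hmul := neg_exp_neg_one_le_mul_log ((exp_pos _).trans_le hre).le
    exact hfunGap_nonneg hre hx0 (by linarith)
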